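/- Let p ≥ 1, d ≥ 1, K ≥ 2, and let μ_1, μ_2, …, μ_K be probability measures on ℝ^d with finite p-th moments, with θ ↦ max_{2≤k≤K} W_p^p(θ♯μ_1, θ♯μ_k) measurable on S^{d−1}. Then SMW_p^p(μ_1, μ_2, …, μ_K; c) ≥ USF(μ_1; μ_{2:K}), i.e., the sliced multi-marginal Wasserstein cost with the maximal ground metric is at least ∫_{S^{d−1}} max_{2≤k≤K} W_p^p(θ♯μ_1, θ♯μ_k) dσ(θ). -/

import Mathlib

open MeasureTheory Metric Real

noncomputable section

/-- `ℝ^d`. -/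
abbrev Rd (d : ℕ) := EuclideanSpace ℝ (Fin d)

/-- The uniform probability measure `σ` on the unit sphere `S^{d-1} ⊂ ℝ^d`,
obtained by normalizing the surface measure coming from the Lebesgue measure. -/
noncomputable def uniformSphere (d : ℕ) :
    Measure (sphere (0 : Rd d) 1) :=
  ((volume : Measure (Rd d)).toSphere Set.univ)⁻¹ • (volume : Measure (Rd d)).toSphere

/-- A measure on `ℝ^d` has finite `p`-th moment. -/
def FiniteMoment {d : ℕ} (p : ℝ) (μ : Measure (Rd d)) : Prop :=
  Integrable (fun x => ‖x‖ ^ p) μ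

/-- A measure on `ℝ` has finite `p`-th moment. -/
def FiniteMoment1 (p : ℝ) (ν : Measure ℝ) : Prop :=
  Integrable (fun x => |x| ^ p) ν

/-- Pushforward `θ♯μ` of `μ` under `x ↦ ⟪θ, x⟫`. -/
def proj {d : ℕ} (θ : sphere (0 : Rd d) 1) (μ : Measure (Rd d)) : Measure ℝ :=
  μ.map (fun x => inner ℝ (θ : Rd d) x)

/-- The set of couplings of two measures on `ℝ`. -/
def Coupling (ν₁ ν₂ : Measure ℝ) : Set (Measure (ℝ × ℝ)) :=
  {γ | IsProbabilityMeasure γ ∧ γ.map Prod.fst = ν₁ ∧ γ.map Prod.snd = ν₂}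

/-- One-dimensional `p`-Wasserstein cost `W_p^p`. -/
def Wpp (p : ℝ) (ν₁ ν₂ : Measure ℝ) : ℝ :=
  sInf ((fun γ : Measure (ℝ × ℝ) => ∫ q, |q.1 - q.2| ^ p ∂γ) '' Coupling ν₁ ν₂)

/-- Sliced `p`-Wasserstein cost `SW_p^p`. -/
def SWpp {d : ℕ} (p : ℝ) (μ₁ μ₂ : Measure (Rd d)) : ℝ :=
  ∫ θ, Wpp p (proj θ μ₁) (proj θ μ₂) ∂(uniformSphere d)

/-- The set of multi-marginal couplings of `K` measures on `ℝ^d`. -/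
def MCoupling {d K : ℕ} (μs : Fin K → Measure (Rd d)) : Set (Measure (Fin K → Rd d)) :=
  {pl | IsProbabilityMeasure pl ∧ ∀ k, pl.map (fun x => x k) = μs k}

/-- The inner multi-marginal transport cost along direction `θ`, with the maximal
ground metric `c(t₁,…,t_K) = max_{i,j} |t_i - t_j|`. -/
def SMWtheta {d K : ℕ} (p : ℝ) (μs : Fin K → Measure (Rd d))
    (θ : sphere (0 : Rd d) 1) : ℝ :=
  sInf ((fun pl : Measure (Fin K → Rd d) =>
      ∫ x, (⨆ i, ⨆ j, |inner ℝ (θ : Rd d) (x i) - inner ℝ (θ : Rd d) (x j)|) ^ p ∂pl)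
    '' MCoupling μs)

/-- Sliced multi-marginal Wasserstein cost `SMW_p^p` with the maximal ground metric. -/
def SMWpp {d K : ℕ} (p : ℝ) (μs : Fin K → Measure (Rd d)) : ℝ :=
  ∫ θ, SMWtheta p μs θ ∂(uniformSphere d)

/-!
Along a direction `θ`, a multi-marginal coupling `π` of `μ₁, …, μ_K` pushes forward under
`x ↦ (⟪θ, x₁⟫, ⟪θ, x_k⟫)` to a coupling of `θ♯μ₁` and `θ♯μ_k`, whose cost `|t₁ - t_k|^p` is
dominated pointwise by the maximal ground cost; hence `W_p^p(θ♯μ₁, θ♯μ_k)` is at most the inner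
multi-marginal cost for every `k`, and integrating over `θ` gives the claim. Since a
non-integrable function has Bochner integral `0`, the inner cost must be shown integrable in `θ`:
it is an infimum of functions of `θ` that are continuous by dominated convergence, hence upper
semicontinuous and measurable, and it is bounded by `2^p` times the sum of the `p`-th moments.
-/

def maxGroundCost {ι : Type*} (t : ι → ℝ) : ℝ :=
  ⨆ i, ⨆ j, |t i - t j|

section MaxGroundCost

variable {ι : Type*}

theorem maxGroundCost_nonneg (t : ι → ℝ) : 0 ≤ maxGroundCost t :=
  Real.iSup_nonneg fun _ => Real.iSup_nonneg fun _ => abs_nonneg _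

theorem abs_sub_le_maxGroundCost [Finite ι] (t : ι → ℝ) (i j : ι) :
    |t i - t j| ≤ maxGroundCost t :=
  (le_ciSup (Finite.bddAbove_range (fun j => |t i - t j|)) j).trans
    (le_ciSup (Finite.bddAbove_range (fun i => ⨆ j, |t i - t j|)) i)

variable [Nonempty ι]

theorem maxGroundCost_le_two_mul {t : ι → ℝ} {M : ℝ} (ht : ∀ i, |t i| ≤ M) :
    maxGroundCost t ≤ 2 * M :=
  ciSup_le fun i => ciSup_le fun j =>
    (abs_sub _ _).trans <| (add_le_add (ht i) (ht j)).trans_eq (two_mul M).symm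

theorem continuous_maxGroundCost [Finite ι] : Continuous (maxGroundCost : (ι → ℝ) → ℝ) := by
  have := Fintype.ofFinite ι
  have h : (maxGroundCost : (ι → ℝ) → ℝ) = fun t =>
      Finset.univ.sup' Finset.univ_nonempty fun i =>
        Finset.univ.sup' Finset.univ_nonempty fun j => |t i - t j| := by
    funext t
    simp only [maxGroundCost, Finset.sup'_univ_eq_ciSup]
  rw [h]
  refine Continuous.finset_sup'_apply _ fun i _ => Continuous.finset_sup'_apply _ fun j _ => ?_
  exact ((continuous_apply i).sub (continuous_apply j)).abs

end MaxGroundCost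

theorem abs_inner_le_norm_of_mem_sphere {E : Type*} [NormedAddCommGroup E]
    [InnerProductSpace ℝ E] (θ : sphere (0 : E) 1) (y : E) : |inner ℝ (θ : E) y| ≤ ‖y‖ :=
  (abs_real_inner_le_norm _ _).trans_eq (by rw [norm_eq_of_mem_sphere, one_mul])

section Wasserstein

variable (p : ℝ) (ν₁ ν₂ : Measure ℝ)

theorem zero_mem_lowerBounds_Wpp_costs :
    0 ∈ lowerBounds ((fun γ : Measure (ℝ × ℝ) => ∫ q, |q.1 - q.2| ^ p ∂γ) '' Coupling ν₁ ν₂) := by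
  rintro _ ⟨γ, -, rfl⟩
  exact integral_nonneg fun q => Real.rpow_nonneg (abs_nonneg _) p

theorem Wpp_nonneg : 0 ≤ Wpp p ν₁ ν₂ :=
  Real.sInf_nonneg (zero_mem_lowerBounds_Wpp_costs p ν₁ ν₂)

variable {p ν₁ ν₂}

theorem Wpp_le_integral {γ : Measure (ℝ × ℝ)} (hγ : γ ∈ Coupling ν₁ ν₂) :
    Wpp p ν₁ ν₂ ≤ ∫ q, |q.1 - q.2| ^ p ∂γ :=
  csInf_le ⟨0, zero_mem_lowerBounds_Wpp_costs p ν₁ ν₂⟩ ⟨γ, hγ, rfl⟩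

end Wasserstein

section SlicedMultiMarginal

variable {d K : ℕ} {p : ℝ} {μs : Fin K → Measure (Rd d)} {pl : Measure (Fin K → Rd d)}

def slicedMaxCost (p : ℝ) (θ : sphere (0 : Rd d) 1) (x : Fin K → Rd d) : ℝ :=
  maxGroundCost (fun i => inner ℝ (θ : Rd d) (x i)) ^ p

theorem slicedMaxCost_nonneg (θ : sphere (0 : Rd d) 1) (x : Fin K → Rd d) :
    0 ≤ slicedMaxCost p θ x :=
  Real.rpow_nonneg (maxGroundCost_nonneg _) p

theorem SMWtheta_eq_iInf (θ : sphere (0 : Rd d) 1) :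
    SMWtheta p μs θ =
      ⨅ pl : MCoupling μs, ∫ x, slicedMaxCost p θ x ∂(pl : Measure (Fin K → Rd d)) :=
  sInf_image'

theorem zero_mem_lowerBounds_SMWtheta_costs (θ : sphere (0 : Rd d) 1) :
    0 ∈ lowerBounds
      ((fun pl : Measure (Fin K → Rd d) => ∫ x, slicedMaxCost p θ x ∂pl) '' MCoupling μs) := by
  rintro _ ⟨pl, -, rfl⟩
  exact integral_nonneg fun x => slicedMaxCost_nonneg θ x

theorem SMWtheta_nonneg (θ : sphere (0 : Rd d) 1) : 0 ≤ SMWtheta p μs θ :=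
  Real.sInf_nonneg (zero_mem_lowerBounds_SMWtheta_costs θ)

theorem SMWtheta_le_integral (hpl : pl ∈ MCoupling μs) (θ : sphere (0 : Rd d) 1) :
    SMWtheta p μs θ ≤ ∫ x, slicedMaxCost p θ x ∂pl :=
  csInf_le ⟨0, zero_mem_lowerBounds_SMWtheta_costs θ⟩ ⟨pl, hpl, rfl⟩

theorem pi_mem_MCoupling (hμs : ∀ i, IsProbabilityMeasure (μs i)) :
    Measure.pi μs ∈ MCoupling μs :=
  have := hμs
  ⟨inferInstance, fun i => (measurePreserving_eval μs i).map_eq⟩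

theorem le_SMWtheta {a : ℝ} (hμs : ∀ i, IsProbabilityMeasure (μs i)) (θ : sphere (0 : Rd d) 1)
    (h : ∀ pl ∈ MCoupling μs, a ≤ ∫ x, slicedMaxCost p θ x ∂pl) : a ≤ SMWtheta p μs θ := by
  refine le_csInf (Set.image_nonempty.2 ⟨_, pi_mem_MCoupling hμs⟩) ?_
  rintro _ ⟨pl, hpl, rfl⟩
  exact h pl hpl

theorem continuous_uncurry_slicedMaxCost [NeZero K] (hp : 0 ≤ p) :
    Continuous (Function.uncurry (slicedMaxCost (d := d) (K := K) p)) := by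
  refine (continuous_maxGroundCost.comp (continuous_pi fun i => ?_)).rpow_const
    fun _ => Or.inr hp
  fun_prop

theorem slicedMaxCost_le_sum [NeZero K] (hp : 0 ≤ p) (θ : sphere (0 : Rd d) 1)
    (x : Fin K → Rd d) : slicedMaxCost p θ x ≤ 2 ^ p * ∑ i, ‖x i‖ ^ p := by
  obtain ⟨i₀, hi₀⟩ := Finite.exists_max fun i => ‖x i‖
  have hcost : maxGroundCost (fun i => inner ℝ (θ : Rd d) (x i)) ≤ 2 * ‖x i₀‖ :=
    maxGroundCost_le_two_mul fun i => (abs_inner_le_norm_of_mem_sphere θ (x i)).trans (hi₀ i)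
  calc slicedMaxCost p θ x ≤ (2 * ‖x i₀‖) ^ p :=
        Real.rpow_le_rpow (maxGroundCost_nonneg _) hcost hp
    _ = 2 ^ p * ‖x i₀‖ ^ p := Real.mul_rpow zero_le_two (norm_nonneg _)
    _ ≤ 2 ^ p * ∑ i, ‖x i‖ ^ p := by
        gcongr
        exact Finset.single_le_sum (fun i _ => Real.rpow_nonneg (norm_nonneg (x i)) p)
          (Finset.mem_univ i₀)

theorem integrable_sum_norm_rpow (hμsm : ∀ i, FiniteMoment p (μs i))
    (hpl : pl ∈ MCoupling μs) : Integrable (fun x : Fin K → Rd d => ∑ i, ‖x i‖ ^ p) pl :=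
  integrable_finsetSum _ fun i _ =>
    ((hpl.2 i).symm ▸ hμsm i : FiniteMoment p (pl.map fun x => x i)).comp_measurable
      (measurable_pi_apply i)

theorem integrable_slicedMaxCost [NeZero K] (hp : 0 ≤ p) (hμsm : ∀ i, FiniteMoment p (μs i))
    (hpl : pl ∈ MCoupling μs) (θ : sphere (0 : Rd d) 1) :
    Integrable (slicedMaxCost p θ) pl := by
  refine ((integrable_sum_norm_rpow hμsm hpl).const_mul (2 ^ p)).mono'
    ((continuous_uncurry_slicedMaxCost hp).uncurry_left θ).aestronglyMeasurable
    (.of_forall fun x => ?_)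
  rw [Real.norm_of_nonneg (slicedMaxCost_nonneg θ x)]
  exact slicedMaxCost_le_sum hp θ x

theorem map_mem_Coupling_proj (hpl : pl ∈ MCoupling μs) (θ : sphere (0 : Rd d) 1) (a b : Fin K) :
    pl.map (fun x => (inner ℝ (θ : Rd d) (x a), inner ℝ (θ : Rd d) (x b))) ∈
      Coupling (proj θ (μs a)) (proj θ (μs b)) := by
  have hθ : Measurable fun y : Rd d => inner ℝ (θ : Rd d) y := by fun_prop
  have hT : Measurable fun x : Fin K → Rd d =>
      (inner ℝ (θ : Rd d) (x a), inner ℝ (θ : Rd d) (x b)) := by fun_prop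
  have := hpl.1
  refine ⟨Measure.isProbabilityMeasure_map hT.aemeasurable, ?_, ?_⟩
  · rw [Measure.map_map measurable_fst hT, ← hpl.2 a, proj,
      Measure.map_map hθ (measurable_pi_apply a)]
    rfl
  · rw [Measure.map_map measurable_snd hT, ← hpl.2 b, proj,
      Measure.map_map hθ (measurable_pi_apply b)]
    rfl

theorem Wpp_proj_le_integral_slicedMaxCost [NeZero K] (hp : 0 ≤ p)
    (hμsm : ∀ i, FiniteMoment p (μs i)) (hpl : pl ∈ MCoupling μs) (θ : sphere (0 : Rd d) 1)
    (a b : Fin K) :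
    Wpp p (proj θ (μs a)) (proj θ (μs b)) ≤ ∫ x, slicedMaxCost p θ x ∂pl := by
  set T : (Fin K → Rd d) → ℝ × ℝ :=
    fun x => (inner ℝ (θ : Rd d) (x a), inner ℝ (θ : Rd d) (x b))
  have hT : Measurable T := by fun_prop
  have hcost (x : Fin K → Rd d) : |(T x).1 - (T x).2| ^ p ≤ slicedMaxCost p θ x :=
    Real.rpow_le_rpow (abs_nonneg _)
      (abs_sub_le_maxGroundCost (fun i => inner ℝ (θ : Rd d) (x i)) a b) hp
  calc Wpp p (proj θ (μs a)) (proj θ (μs b))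
      ≤ ∫ q, |q.1 - q.2| ^ p ∂(pl.map T) := Wpp_le_integral (map_mem_Coupling_proj hpl θ a b)
    _ = ∫ x, |(T x).1 - (T x).2| ^ p ∂pl := integral_map hT.aemeasurable (by fun_prop)
    _ ≤ ∫ x, slicedMaxCost p θ x ∂pl :=
        integral_mono_of_nonneg (.of_forall fun x => Real.rpow_nonneg (abs_nonneg _) p)
          (integrable_slicedMaxCost hp hμsm hpl θ) (.of_forall hcost)

theorem Wpp_proj_le_SMWtheta [NeZero K] (hp : 0 ≤ p) (hμs : ∀ i, IsProbabilityMeasure (μs i))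
    (hμsm : ∀ i, FiniteMoment p (μs i)) (θ : sphere (0 : Rd d) 1) (a b : Fin K) :
    Wpp p (proj θ (μs a)) (proj θ (μs b)) ≤ SMWtheta p μs θ :=
  le_SMWtheta hμs θ fun _ hpl => Wpp_proj_le_integral_slicedMaxCost hp hμsm hpl θ a b

theorem continuous_integral_slicedMaxCost [NeZero K] (hp : 0 ≤ p)
    (hμsm : ∀ i, FiniteMoment p (μs i)) (hpl : pl ∈ MCoupling μs) :
    Continuous fun θ : sphere (0 : Rd d) 1 => ∫ x, slicedMaxCost p θ x ∂pl := by
  have hcont := continuous_uncurry_slicedMaxCost (d := d) (K := K) hp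
  refine continuous_of_dominated (bound := fun x => 2 ^ p * ∑ i, ‖x i‖ ^ p)
    (fun θ => (hcont.uncurry_left θ).aestronglyMeasurable) (fun θ => .of_forall fun x => ?_)
    ((integrable_sum_norm_rpow hμsm hpl).const_mul _) (.of_forall fun x => hcont.uncurry_right x)
  rw [Real.norm_of_nonneg (slicedMaxCost_nonneg θ x)]
  exact slicedMaxCost_le_sum hp θ x

theorem upperSemicontinuous_SMWtheta [NeZero K] (hp : 0 ≤ p)
    (hμsm : ∀ i, FiniteMoment p (μs i)) : UpperSemicontinuous (SMWtheta p μs) := by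
  simp_rw [funext (SMWtheta_eq_iInf (p := p) (μs := μs))]
  refine upperSemicontinuous_ciInf (fun θ => ⟨0, ?_⟩)
    fun pl => (continuous_integral_slicedMaxCost hp hμsm pl.2).upperSemicontinuous
  rintro _ ⟨pl, rfl⟩
  exact integral_nonneg fun x => slicedMaxCost_nonneg θ x

theorem integrable_SMWtheta [NeZero K] (hp : 0 ≤ p) (hμs : ∀ i, IsProbabilityMeasure (μs i))
    (hμsm : ∀ i, FiniteMoment p (μs i)) (ν : Measure (sphere (0 : Rd d) 1)) [IsFiniteMeasure ν] :
    Integrable (SMWtheta p μs) ν := by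
  have hpi := pi_mem_MCoupling hμs
  refine .of_bound (upperSemicontinuous_SMWtheta hp hμsm).measurable.aestronglyMeasurable
    (∫ x, 2 ^ p * ∑ i, ‖x i‖ ^ p ∂Measure.pi μs) (.of_forall fun θ => ?_)
  rw [Real.norm_of_nonneg (SMWtheta_nonneg θ)]
  exact (SMWtheta_le_integral hpi θ).trans <| integral_mono_of_nonneg
    (.of_forall (slicedMaxCost_nonneg θ)) ((integrable_sum_norm_rpow hμsm hpi).const_mul _)
    (.of_forall (slicedMaxCost_le_sum hp θ))

end SlicedMultiMarginal

instance (d : ℕ) : IsFiniteMeasure (uniformSphere d) where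
  measure_univ_lt_top := by
    rw [uniformSphere, Measure.smul_apply, smul_eq_mul]
    exact (ENNReal.inv_mul_le_one _).trans_lt ENNReal.one_lt_top

theorem smw_ge_usf_general (p : ℝ) (hp : 1 ≤ p) (d : ℕ)
    (K : ℕ) (μ₁ : Measure (Rd d)) (μs : Fin K → Measure (Rd d))
    (hμ₁ : IsProbabilityMeasure μ₁) (hμ₁m : FiniteMoment p μ₁)
    (hμs : ∀ k, IsProbabilityMeasure (μs k)) (hμsm : ∀ k, FiniteMoment p (μs k)) :
    ∫ θ, (⨆ k, Wpp p (proj θ μ₁) (proj θ (μs k))) ∂(uniformSphere d) ≤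
      SMWpp p (Fin.cons μ₁ μs) := by
  have hp₀ : 0 ≤ p := zero_le_one.trans hp
  have hprob : ∀ i, IsProbabilityMeasure ((Fin.cons μ₁ μs : Fin (K + 1) → Measure (Rd d)) i) :=
    Fin.forall_fin_succ.2 ⟨hμ₁, hμs⟩
  have hmom : ∀ i, FiniteMoment p ((Fin.cons μ₁ μs : Fin (K + 1) → Measure (Rd d)) i) :=
    Fin.forall_fin_succ.2 ⟨hμ₁m, hμsm⟩
  refine integral_mono_of_nonneg (.of_forall fun θ => Real.iSup_nonneg fun k => Wpp_nonneg _ _ _)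
    (integrable_SMWtheta hp₀ hprob hmom _) (.of_forall fun θ => ?_)
  exact Real.iSup_le (fun k => Wpp_proj_le_SMWtheta hp₀ hprob hmom θ 0 k.succ) (SMWtheta_nonneg θ)

/-- The sliced multi-marginal Wasserstein cost (with maximal ground metric) of
`(μ₁, μ_2, …, μ_{K+1})` dominates the us-MFSWB objective
`USF(μ₁; μ_{2:K+1}) = ∫ max_k W_p^p(θ♯μ₁, θ♯μ_k) dσ(θ)`.
Here `μs : Fin K → Measure (Rd d)` lists the marginals `μ_2, …, μ_{K+1}` (`K ≥ 1`,
so there are at least two marginals in total). -/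
theorem smw_ge_usf (p : ℝ) (hp : 1 ≤ p) (d : ℕ) (hd : 1 ≤ d)
    (K : ℕ) (hK : 1 ≤ K) (μ₁ : Measure (Rd d)) (μs : Fin K → Measure (Rd d))
    (hμ₁ : IsProbabilityMeasure μ₁) (hμ₁m : FiniteMoment p μ₁)
    (hμs : ∀ k, IsProbabilityMeasure (μs k)) (hμsm : ∀ k, FiniteMoment p (μs k))
    (hmeas : Measurable fun θ : sphere (0 : Rd d) 1 =>
      ⨆ k, Wpp p (proj θ μ₁) (proj θ (μs k))) :
    ∫ θ, (⨆ k, Wpp p (proj θ μ₁) (proj θ (μs k))) ∂(uniformSphere d) ≤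
      SMWpp p (Fin.cons μ₁ μs) :=
  smw_ge_usf_general p hp d K μ₁ μs hμ₁ hμ₁m hμs hμsm
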